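/- arXiv:1109.3550 — 6 statements merged into one kernel-verified Lean document; each statement's English description precedes it below -/
import Mathlib

section
/- Let G be a group acting on a set X, let x ∈ X, and let A ⊆ G be a non-empty finite set. Then |AA⁻¹ ∩ G_x| ≥ |A| / |x^A|. Moreover, for every finite set B ⊆ G, |AB| ≥ |A ∩ G_x| · |x^B|. -/
open scoped Pointwise

/-- **Orbit–stabilizer theorem for sets** (Lemma 3.1). Here `act` is a right action of `G`
on `X` (written `x^g` in the paper), `A` is a non-empty finite subset of `G`, and `G_x` is
the stabilizer of `x`. Then `|AA⁻¹ ∩ G_x| ≥ |A|/|x^A|`, and for every finite `B ⊆ G`,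
`|AB| ≥ |A ∩ G_x| ⬝ |x^B|`. -/
theorem orbit_stabilizer_for_sets {G X : Type*} [Group G] [DecidableEq G] [DecidableEq X]
    (act : X → G → X)
    (hact_one : ∀ x : X, act x 1 = x)
    (hact_mul : ∀ (x : X) (g h : G), act x (g * h) = act (act x g) h)
    (x : X) (A B : Finset G) (hA : A.Nonempty) :
    (A.card : ℝ) / ((A.image (act x)).card : ℝ) ≤
      (((A * A⁻¹).filter (fun g => act x g = x)).card : ℝ) ∧
    (A.filter (fun g => act x g = x)).card * (B.image (act x)).card ≤ (A * B).card := by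
  classical
  constructor
  · -- first part
    set S := (A * A⁻¹).filter (fun g => act x g = x) with hS
    have key : ∀ y ∈ A.image (act x),
        (A.filter (fun a => act x a = y)).card ≤ S.card := by
      intro y hy
      obtain ⟨a₀, ha₀A, ha₀⟩ := Finset.mem_image.mp hy
      apply Finset.card_le_card_of_injOn (fun a => a * a₀⁻¹)
      · intro a ha
        rw [Finset.mem_coe, Finset.mem_filter] at ha
        rw [Finset.mem_coe, hS, Finset.mem_filter]
        constructor
        · exact Finset.mul_mem_mul ha.1 (Finset.inv_mem_inv ha₀A)
        · have : act x (a * a₀⁻¹) = act (act x a₀) a₀⁻¹ := by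
            rw [hact_mul, ha.2, ha₀]
          rw [this, ← hact_mul, mul_inv_cancel, hact_one]
      · intro a _ b _ h
        exact mul_right_cancel h
    have hsum : A.card = ∑ y ∈ A.image (act x), (A.filter (fun a => act x a = y)).card :=
      Finset.card_eq_sum_card_fiberwise (fun a ha => Finset.mem_image_of_mem _ ha)
    have hle : A.card ≤ (A.image (act x)).card * S.card := by
      rw [hsum]
      calc ∑ y ∈ A.image (act x), (A.filter (fun a => act x a = y)).card
          ≤ ∑ _y ∈ A.image (act x), S.card := Finset.sum_le_sum key
        _ = (A.image (act x)).card * S.card := by rw [Finset.sum_const, smul_eq_mul]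
    have himg : (0:ℝ) < ((A.image (act x)).card : ℝ) := by
      have := (hA.image (act x)).card_pos
      exact_mod_cast this
    rw [div_le_iff₀ himg]
    calc (A.card : ℝ) ≤ ((A.image (act x)).card : ℝ) * (S.card : ℝ) := by exact_mod_cast hle
      _ = (S.card : ℝ) * ((A.image (act x)).card : ℝ) := mul_comm _ _
  · -- second part
    have hb : ∀ y ∈ B.image (act x), ∃ b ∈ B, act x b = y := by
      intro y hy
      simpa using Finset.mem_image.mp hy
    set bo : X → G := fun y => if h : ∃ b ∈ B, act x b = y then h.choose else 1 with hbo
    have hbo1 : ∀ y ∈ B.image (act x), bo y ∈ B ∧ act x (bo y) = y := by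
      intro y hy
      have h := hb y hy
      simp only [hbo, dif_pos h]
      exact ⟨h.choose_spec.1, h.choose_spec.2⟩
    rw [← Finset.card_product]
    apply Finset.card_le_card_of_injOn (fun p => p.1 * bo p.2)
    · rintro ⟨a, y⟩ hp
      rw [Finset.mem_coe, Finset.mem_product] at hp
      obtain ⟨ha, hy⟩ := hp
      rw [Finset.mem_filter] at ha
      exact Finset.mul_mem_mul ha.1 (hbo1 y hy).1
    · rintro ⟨a, y⟩ hp ⟨a', y'⟩ hp' h
      rw [Finset.mem_coe, Finset.mem_product] at hp hp'
      obtain ⟨ha, hy⟩ := hp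
      obtain ⟨ha', hy'⟩ := hp'
      rw [Finset.mem_filter] at ha ha'
      simp only at h
      have hy1 : act x (a * bo y) = y := by
        rw [hact_mul, ha.2, (hbo1 y hy).2]
      have hy2 : act x (a' * bo y') = y' := by
        rw [hact_mul, ha'.2, (hbo1 y' hy').2]
      have hyy : y = y' := by rw [← hy1, ← hy2, h]
      subst hyy
      have : a = a' := mul_right_cancel h
      simp [this]
end

section
/- Let G be a group, let H ≤ K ≤ G be subgroups with K of finite index, and let A ⊆ G be a non-empty finite set. Then the number of right cosets of H in K that AA⁻¹ ∩ K intersects is at least the number of right cosets of H in G that A intersects, divided by the number of right cosets of K in G that A intersects; in particular it is at least (number of right cosets of H in G intersecting A) / [G : K]. -/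
open scoped Pointwise

/-- The number of right cosets of `H` in `G` that the set `S` intersects. -/
noncomputable def rightCosetCount {G : Type*} [Group G] (H : Subgroup G) (S : Set G) : ℕ :=
  Set.ncard ((fun g => Quotient.mk (QuotientGroup.rightRel H) g) '' S)

/-- Lemma 3.5 (`subgroup cosets`). Let `H ≤ K ≤ G` with `K` of finite index, and let
`A ⊆ G` be a non-empty finite set. Then the number of right cosets of `H` (all lying in `K`)
met by `AA⁻¹ ∩ K` is at least the number of right cosets of `H` met by `A` divided by the
number of right cosets of `K` met by `A`; in particular, at least the former divided by
`[G : K]`. -/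
theorem coset_counting {G : Type*} [Group G] (H K : Subgroup G) (hHK : H ≤ K)
    (hK : K.index ≠ 0) (A : Set G) (hA : A.Nonempty) (hfin : A.Finite) :
    ((rightCosetCount H A : ℝ) / (rightCosetCount K A : ℝ) ≤
        (rightCosetCount H ((A * A⁻¹) ∩ (K : Set G)) : ℝ)) ∧
    ((rightCosetCount H A : ℝ) / (K.index : ℝ) ≤
        (rightCosetCount H ((A * A⁻¹) ∩ (K : Set G)) : ℝ)) := by
  classical
  set B : Set G := (A * A⁻¹) ∩ (K : Set G) with hB
  set mkH : G → Quotient (QuotientGroup.rightRel H) :=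
    fun g => Quotient.mk (QuotientGroup.rightRel H) g with hmkH
  set mkK : G → Quotient (QuotientGroup.rightRel K) :=
    fun g => Quotient.mk (QuotientGroup.rightRel K) g with hmkK
  -- choose a representative in A for each K-coset met by A
  have hrep : ∀ κ ∈ mkK '' A, ∃ a ∈ A, mkK a = κ := by
    rintro κ ⟨a, ha, rfl⟩; exact ⟨a, ha, rfl⟩
  choose σ hσA hσmk using hrep
  -- the map
  let F : G → Quotient (QuotientGroup.rightRel K) × Quotient (QuotientGroup.rightRel H) :=
    fun g =>
      (mkK g, if h : mkK g ∈ mkK '' A then mkH (g * (σ (mkK g) h)⁻¹) else mkH g)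
  have hFresp : ∀ a b : G, b * a⁻¹ ∈ H → F a = F b := by
    intro a b hab
    have hKab : mkK a = mkK b := Quotient.sound ((QuotientGroup.rightRel_apply).2 (hHK hab))
    simp only [F, hKab]
    congr 1
    by_cases h : mkK b ∈ mkK '' A
    · rw [dif_pos h, dif_pos h]
      exact Quotient.sound ((QuotientGroup.rightRel_apply (s := H)).mpr
        (by simpa [mul_assoc] using hab))
    · rw [dif_neg h, dif_neg h]
      exact Quotient.sound (QuotientGroup.rightRel_apply.mpr hab)
  -- lift to the quotient
  let f : Quotient (QuotientGroup.rightRel H) →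
      Quotient (QuotientGroup.rightRel K) × Quotient (QuotientGroup.rightRel H) :=
    Quotient.lift F (fun a b hab => hFresp a b ((QuotientGroup.rightRel_apply).1 hab))
  have hmaps : ∀ q ∈ mkH '' A, f q ∈ (mkK '' A) ×ˢ (mkH '' B) := by
    rintro q ⟨a, ha, rfl⟩
    have hmem : mkK a ∈ mkK '' A := ⟨a, ha, rfl⟩
    have hfq : f (mkH a) = (mkK a, mkH (a * (σ (mkK a) hmem)⁻¹)) := by
      show F a = _
      simp only [F, dif_pos hmem]
    rw [hfq]
    refine ⟨hmem, ?_⟩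
    refine ⟨a * (σ (mkK a) hmem)⁻¹, ⟨?_, ?_⟩, rfl⟩
    · exact Set.mul_mem_mul ha (Set.inv_mem_inv.2 (hσA _ hmem))
    · have := hσmk (mkK a) hmem
      have : (QuotientGroup.rightRel K) (σ (mkK a) hmem) a := Quotient.exact this
      have := (QuotientGroup.rightRel_apply).1 this
      exact this
  have hinj : Set.InjOn f (mkH '' A) := by
    rintro q ⟨a, ha, rfl⟩ q' ⟨b, hb, rfl⟩ heq
    have hmema : mkK a ∈ mkK '' A := ⟨a, ha, rfl⟩
    have hmemb : mkK b ∈ mkK '' A := ⟨b, hb, rfl⟩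
    have hfa : f (mkH a) = (mkK a, mkH (a * (σ (mkK a) hmema)⁻¹)) := by
      show F a = _; simp only [F, dif_pos hmema]
    have hfb : f (mkH b) = (mkK b, mkH (b * (σ (mkK b) hmemb)⁻¹)) := by
      show F b = _; simp only [F, dif_pos hmemb]
    rw [hfa, hfb] at heq
    obtain ⟨h1, h2⟩ := Prod.mk.injEq .. ▸ heq
    have h1 : mkK a = mkK b := congrArg Prod.fst heq
    have h2 := congrArg Prod.snd heq
    simp only at h2
    have hσeq : σ (mkK a) hmema = σ (mkK b) hmemb := by
      congr 1
    rw [hσeq] at h2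
    have := (QuotientGroup.rightRel_apply).1 (Quotient.exact h2)
    exact Quotient.sound ((QuotientGroup.rightRel_apply (s := H)).mpr
      (by simpa [mul_assoc] using this))
  -- finiteness facts
  have hfinA : (mkH '' A).Finite := hfin.image _
  have hfinKA : (mkK '' A).Finite := hfin.image _
  have hfinB : (mkH '' B).Finite :=
    ((hfin.mul (hfin.inv)).inter_of_left _).image _
  have hcard : rightCosetCount H A ≤ rightCosetCount K A * rightCosetCount H B := by
    have := Set.ncard_le_ncard_of_injOn f hmaps hinj (hfinKA.prod hfinB)
    refine this.trans (le_of_eq ?_)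
    rw [show rightCosetCount K A * rightCosetCount H B
        = (mkK '' A).ncard * (mkH '' B).ncard from rfl,
      ← Nat.card_coe_set_eq, ← Nat.card_coe_set_eq, ← Nat.card_coe_set_eq,
      ← Nat.card_prod, ← Nat.card_congr (Equiv.Set.prod _ _)]
  have hKApos : 0 < rightCosetCount K A := (Set.ncard_pos hfinKA).2 (hA.image _)
  have hKAle : rightCosetCount K A ≤ K.index := by
    have : Finite (G ⧸ K) := Nat.finite_of_card_ne_zero hK
    have : Finite (Quotient (QuotientGroup.rightRel K)) :=
      Finite.of_equiv _ (QuotientGroup.quotientRightRelEquivQuotientLeftRel K).symm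
    calc rightCosetCount K A ≤ (Set.univ : Set (Quotient (QuotientGroup.rightRel K))).ncard :=
          Set.ncard_le_ncard (Set.subset_univ _) Set.finite_univ
      _ = Nat.card (Quotient (QuotientGroup.rightRel K)) := Set.ncard_univ _
      _ = Nat.card (G ⧸ K) := Nat.card_congr (QuotientGroup.quotientRightRelEquivQuotientLeftRel K)
      _ = K.index := rfl
  have h1 : (rightCosetCount H A : ℝ) / (rightCosetCount K A : ℝ) ≤
      (rightCosetCount H B : ℝ) := by
    rw [div_le_iff₀ (by exact_mod_cast hKApos)]
    calc (rightCosetCount H A : ℝ) ≤ (rightCosetCount K A * rightCosetCount H B : ℕ) := by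
          exact_mod_cast hcard
      _ = (rightCosetCount H B : ℝ) * (rightCosetCount K A : ℝ) := by push_cast; ring
  refine ⟨h1, le_trans ?_ h1⟩
  apply div_le_div_of_nonneg_left (by positivity) (by exact_mod_cast hKApos)
  exact_mod_cast hKAle
end

section
/- Let G be a group and H a subgroup of G. Let A ⊆ G satisfy A = A⁻¹ and e ∈ A, and suppose A intersects every right coset of H in G. Then A³ ∩ H generates the subgroup ⟨A⟩ ∩ H, and moreover ⟨A⟩ = ⟨A³ ∩ H⟩ · A. -/
open scoped Pointwise

/-- **Schreier's lemma** (Lemma 3.6). Let `H ≤ G` and let `A ⊆ G` with `A = A⁻¹` and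
`e ∈ A`, such that `A` meets every right coset `Hg` of `H` in `G`. Then `A³ ∩ H` generates
`⟨A⟩ ∩ H`, and moreover `⟨A⟩ = ⟨A³ ∩ H⟩ ⬝ A`. -/
theorem schreier_lemma {G : Type*} [Group G] (H : Subgroup G) (A : Set G)
    (hsymm : A⁻¹ = A) (hone : (1 : G) ∈ A)
    (hcosets : ∀ g : G, ∃ a ∈ A, a * g⁻¹ ∈ H) :
    Subgroup.closure (A * A * A ∩ (H : Set G)) = Subgroup.closure A ⊓ H ∧
    (Subgroup.closure (A * A * A ∩ (H : Set G)) : Set G) * A =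
      (Subgroup.closure A : Set G) := by
  set W := Subgroup.closure (A * A * A ∩ (H : Set G)) with hWdef
  have hinv : ∀ a ∈ A, a⁻¹ ∈ A := by
    intro a ha
    rw [← hsymm]
    exact Set.inv_mem_inv.2 ha
  have hWH : W ≤ H := (Subgroup.closure_le H).2 fun x hx => hx.2
  have hWA : W ≤ Subgroup.closure A := by
    apply (Subgroup.closure_le _).2
    rintro x ⟨hx, -⟩
    obtain ⟨y, ⟨u, hu, v, hv, rfl⟩, z, hz, rfl⟩ := hx
    exact mul_mem (mul_mem (Subgroup.subset_closure hu) (Subgroup.subset_closure hv))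
      (Subgroup.subset_closure hz)
  -- key step: W * A is stable under right multiplication by A
  have key : ∀ x : G, (∃ h ∈ (W : Set G), ∃ a ∈ A, h * a = x) → ∀ b ∈ A,
      ∃ h ∈ (W : Set G), ∃ a ∈ A, h * a = x * b := by
    rintro x ⟨h, hh, a, ha, rfl⟩ b hb
    obtain ⟨c, hc, hcH⟩ := hcosets (a * b)
    have habc : a * b * c⁻¹ ∈ A * A * A ∩ (H : Set G) := by
      constructor
      · exact ⟨a * b, ⟨a, ha, b, hb, rfl⟩, c⁻¹, hinv c hc, rfl⟩
      · have := H.inv_mem hcH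
        simpa using this
    refine ⟨h * (a * b * c⁻¹), mul_mem hh (Subgroup.subset_closure habc), c, hc, ?_⟩
    group
  -- every element of closure A lies in W * A
  have main' : ∀ l : List G, (∀ y ∈ l, y ∈ A) → ∃ h ∈ (W : Set G), ∃ a ∈ A, h * a = l.prod := by
    intro l
    induction l using List.reverseRecOn with
    | nil => exact fun _ => ⟨1, W.one_mem, 1, hone, by simp⟩
    | append_singleton t b ih =>
      intro hl
      have hb : b ∈ A := hl b (by simp)
      have ht : ∀ y ∈ t, y ∈ A := fun y hy => hl y (by simp [hy])
      have := key t.prod (ih ht) b hb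
      simpa using this
  have main : ∀ g ∈ Subgroup.closure A, ∃ h ∈ (W : Set G), ∃ a ∈ A, h * a = g := by
    intro g hg
    have hg' : g ∈ Submonoid.closure A := by
      have := Subgroup.closure_toSubmonoid A
      rw [hsymm, Set.union_self] at this
      rw [← this]
      exact hg
    obtain ⟨l, hl, rfl⟩ := Submonoid.exists_list_of_mem_closure hg'
    exact main' l hl
  constructor
  · apply le_antisymm (le_inf hWA hWH)
    rintro g ⟨hgA, hgH⟩
    obtain ⟨h, hh, a, ha, rfl⟩ := main g hgA
    have haH : a ∈ (H : Set G) := by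
      have : h⁻¹ * (h * a) ∈ H := H.mul_mem (H.inv_mem (hWH hh)) hgH
      simpa using this
    have haW : a ∈ W := Subgroup.subset_closure
      ⟨⟨1 * 1, ⟨1, hone, 1, hone, rfl⟩, a, ha, by simp⟩, haH⟩
    exact mul_mem hh haW
  · apply Set.Subset.antisymm
    · rintro x ⟨h, hh, a, ha, rfl⟩
      exact mul_mem (hWA hh) (Subgroup.subset_closure ha)
    · intro g hg
      obtain ⟨h, hh, a, ha, rfl⟩ := main g hg
      exact ⟨h, hh, a, ha, rfl⟩
end

section
/- Let G be a group acting transitively on a finite set X, and let A ⊆ G with A = A⁻¹ and G = ⟨A⟩. Then there is a subset A' ⊆ A with |A'| < |X| such that the subgroup ⟨A'⟩ acts transitively on X. -/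
open MulAction

private lemma aux_small_trans {G X : Type*} [Group G] [MulAction G X]
    [Fintype X] [Nonempty X]
    (htrans : MulAction.IsPretransitive G X)
    (A : Set G) (hgen : Subgroup.closure A = ⊤) :
    ∀ n (S : Finset G), (S : Set G) ⊆ A →
      Nat.card (Quotient (MulAction.orbitRel (Subgroup.closure (S : Set G)) X)) = n →
      ∃ T : Finset G, (T : Set G) ⊆ A ∧ T.card ≤ S.card + (n - 1) ∧
        ∀ x y : X, ∃ g ∈ Subgroup.closure (T : Set G), g • x = y := by
  intro n
  induction n using Nat.strong_induction_on with
  | _ n IH =>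
  intro S hS hn
  classical
  set H := Subgroup.closure (S : Set G) with hH
  let q : X → Quotient (MulAction.orbitRel H X) := Quotient.mk _
  by_cases htr : ∀ x y : X, q x = q y
  · refine ⟨S, hS, by omega, fun x y => ?_⟩
    have h := Quotient.exact (htr y x)
    obtain ⟨h, hh⟩ := h
    exact ⟨(h : G), h.2, hh⟩
  · push_neg at htr
    obtain ⟨x, y, hxy⟩ := htr
    -- find a ∈ A moving some point to a different orbit
    have hkey : ∃ a ∈ A, ∃ u : X, q (a • u) ≠ q u := by
      by_contra hcon
      push_neg at hcon
      let K : Subgroup G :=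
        { carrier := {g | ∀ u : X, q (g • u) = q u}
          one_mem' := fun u => by simp
          mul_mem' := by
            intro g h hg hh u
            rw [mul_smul, hg (h • u), hh u]
          inv_mem' := by
            intro g hg u
            have := hg (g⁻¹ • u)
            rwa [smul_inv_smul, eq_comm] at this }
      have hAK : A ⊆ K := fun a ha u => hcon a ha u
      have hK : Subgroup.closure A ≤ K := (Subgroup.closure_le K).2 hAK
      rw [hgen] at hK
      obtain ⟨g, hg⟩ := htrans.exists_smul_eq x y
      have : q (g • x) = q x := hK (Subgroup.mem_top g) x
      rw [hg] at this
      exact hxy this.symm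
    obtain ⟨a, haA, u, hu⟩ := hkey
    set S' : Finset G := insert a S with hS'
    have hS'A : (S' : Set G) ⊆ A := by
      rw [hS', Finset.coe_insert]
      exact Set.insert_subset haA hS
    set H' := Subgroup.closure (S' : Set G) with hH'
    have hHH' : H ≤ H' := Subgroup.closure_mono (by
      rw [hS', Finset.coe_insert]; exact Set.subset_insert _ _)
    -- the quotient map between orbit quotients
    have hrel : ∀ p r : X, MulAction.orbitRel H X p r → MulAction.orbitRel H' X p r := by
      intro p r hpr
      obtain ⟨h, hh⟩ := hpr
      exact ⟨⟨(h : G), hHH' h.2⟩, hh⟩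
    let f : Quotient (MulAction.orbitRel H X) → Quotient (MulAction.orbitRel H' X) :=
      Quotient.map id (fun p r hpr => hrel p r hpr)
    have hfsurj : Function.Surjective f := by
      intro z
      obtain ⟨p, rfl⟩ := Quotient.exists_rep z
      exact ⟨Quotient.mk _ p, rfl⟩
    have hfni : ¬ Function.Injective f := by
      intro hinj
      apply hu
      apply hinj
      show Quotient.mk _ (a • u) = Quotient.mk _ u
      apply Quotient.sound
      have haH' : a ∈ H' := Subgroup.subset_closure (by
        rw [hS', Finset.coe_insert]; exact Set.mem_insert a _)
      exact ⟨⟨a, haH'⟩, rfl⟩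
    have fin1 : Fintype (Quotient (MulAction.orbitRel H X)) := Fintype.ofFinite _
    have fin2 : Fintype (Quotient (MulAction.orbitRel H' X)) := Fintype.ofFinite _
    have hlt : Nat.card (Quotient (MulAction.orbitRel H' X)) <
        Nat.card (Quotient (MulAction.orbitRel H X)) := by
      rw [Nat.card_eq_fintype_card, Nat.card_eq_fintype_card]
      exact Fintype.card_lt_of_surjective_not_injective f hfsurj hfni
    set m := Nat.card (Quotient (MulAction.orbitRel H' X)) with hm
    have hmn : m < n := hn ▸ hlt
    have hne : Nonempty (Quotient (MulAction.orbitRel H' X)) :=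
      ⟨Quotient.mk _ (Classical.arbitrary X)⟩
    have hm1 : 1 ≤ m := Nat.card_pos
    obtain ⟨T, hTA, hTcard, hTtrans⟩ := IH m hmn S' hS'A rfl
    refine ⟨T, hTA, ?_, hTtrans⟩
    have hcard : S'.card ≤ S.card + 1 := Finset.card_insert_le _ _
    omega

/-- Lemma 3.8. Let `G` act transitively on a finite set `X`, and let `A ⊆ G` with
`A = A⁻¹` and `G = ⟨A⟩`. Then there is a subset `A' ⊆ A` with `|A'| < |X|` such that
`⟨A'⟩` acts transitively on `X`. -/
theorem small_transitive_generating_subset {G X : Type*} [Group G] [MulAction G X]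
    [Fintype X] [Nonempty X]
    (htrans : MulAction.IsPretransitive G X)
    (A : Set G) (hsymm : A⁻¹ = A) (hgen : Subgroup.closure A = ⊤) :
    ∃ A' : Set G, A' ⊆ A ∧ A'.Finite ∧ A'.ncard < Fintype.card X ∧
      ∀ x y : X, ∃ g ∈ Subgroup.closure A', g • x = y := by
  classical
  set n := Nat.card (Quotient (MulAction.orbitRel (Subgroup.closure ((∅ : Finset G) : Set G)) X))
  have hne : Nonempty (Quotient (MulAction.orbitRel
      (Subgroup.closure ((∅ : Finset G) : Set G)) X)) :=
    ⟨Quotient.mk _ (Classical.arbitrary X)⟩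
  have hn1 : 1 ≤ n := Nat.card_pos
  have hnX : n ≤ Fintype.card X := by
    rw [← Nat.card_eq_fintype_card]
    exact Nat.card_le_card_of_surjective _ Quotient.mk_surjective
  obtain ⟨T, hTA, hTcard, hTtrans⟩ :=
    aux_small_trans htrans A hgen n ∅ (by simp) rfl
  refine ⟨(T : Set G), hTA, T.finite_toSet, ?_, hTtrans⟩
  rw [Set.ncard_coe_finset]
  have hX : 1 ≤ Fintype.card X := Fintype.card_pos
  simp at hTcard
  omega
end

section
/- For every real number d with 0.5 < d < 1 there exists N(d) such that the following holds for all n ≥ N(d): if H ≤ Sym(n) is a subgroup with |H| ≥ dⁿ · n!, then H has an orbit on [n] of length at least d·n. -/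
open Real Multiset

/-! ### Multiset helpers -/

private lemma ms_prod_nonneg (t : Multiset ℕ) (g : ℕ → ℝ) (hg : ∀ b ∈ t, 0 ≤ g b) :
    0 ≤ (t.map g).prod := by
  induction t using Multiset.induction_on with
  | empty => simp
  | cons a s ih =>
    simp only [Multiset.map_cons, Multiset.prod_cons]
    exact mul_nonneg (hg a (Multiset.mem_cons_self a s))
      (ih fun b hb => hg b (Multiset.mem_cons_of_mem hb))

private lemma ms_prod_le (t : Multiset ℕ) (g h : ℕ → ℝ) (hg : ∀ b ∈ t, 0 ≤ g b)
    (hgh : ∀ b ∈ t, g b ≤ h b) : (t.map g).prod ≤ (t.map h).prod := by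
  induction t using Multiset.induction_on with
  | empty => simp
  | cons a s ih =>
    simp only [Multiset.map_cons, Multiset.prod_cons]
    have h1 : ∀ b ∈ s, 0 ≤ g b := fun b hb => hg b (Multiset.mem_cons_of_mem hb)
    have h2 : ∀ b ∈ s, g b ≤ h b := fun b hb => hgh b (Multiset.mem_cons_of_mem hb)
    have hga : 0 ≤ g a := hg a (Multiset.mem_cons_self a s)
    exact mul_le_mul (hgh a (Multiset.mem_cons_self a s)) (ih h1 h2)
      (ms_prod_nonneg s g h1) (le_trans hga (hgh a (Multiset.mem_cons_self a s)))

private lemma ms_prod_exp (t : Multiset ℕ) (c : ℕ → ℝ) :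
    (t.map fun b => Real.exp (c b)).prod = Real.exp ((t.map c).sum) := by
  induction t using Multiset.induction_on with
  | empty => simp
  | cons a s ih => simp [Real.exp_add, ih]

private lemma ms_prod_pow (t : Multiset ℕ) (x : ℝ) :
    (t.map fun b => x ^ b).prod = x ^ t.sum := by
  induction t using Multiset.induction_on with
  | empty => simp
  | cons a s ih => simp [pow_add, ih]

private lemma ms_sum_cast (t : Multiset ℕ) :
    (t.map fun b : ℕ => (b : ℝ)).sum = (t.sum : ℝ) := by
  induction t using Multiset.induction_on with
  | empty => simp
  | cons a s ih =>
    simp only [Multiset.map_cons, Multiset.sum_cons, ih]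
    push_cast
    ring

private lemma ms_sum_one_sub (t : Multiset ℕ) :
    (t.map fun b : ℕ => (1 : ℝ) - b).sum = (t.card : ℝ) - t.sum := by
  induction t using Multiset.induction_on with
  | empty => simp
  | cons a s ih =>
    simp only [Multiset.map_cons, Multiset.sum_cons, Multiset.card_cons, ih]
    have := ms_sum_cast s
    push_cast
    ring

private lemma ms_le_sum {t : Multiset ℕ} {b : ℕ} (hb : b ∈ t) : b ≤ t.sum := by
  have := Multiset.cons_erase hb
  calc b ≤ b + (t.erase b).sum := Nat.le_add_right _ _
  _ = (b ::ₘ t.erase b).sum := (Multiset.sum_cons _ _).symm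
  _ = t.sum := by rw [this]

/-! ### Elementary real factorial estimates -/

private lemma sub1 (k : ℕ) (hk : 1 ≤ k) : ((k : ℝ) + 1) ^ k ≤ (k : ℝ) ^ k * Real.exp 1 := by
  have hk0 : (0 : ℝ) < k := by exact_mod_cast hk
  have h1 : (k : ℝ) + 1 ≤ (k : ℝ) * Real.exp (1 / k) := by
    have := Real.add_one_le_exp (1 / (k : ℝ))
    calc (k : ℝ) + 1 = (k : ℝ) * (1 / k + 1) := by field_simp; ring
    _ ≤ (k : ℝ) * Real.exp (1 / k) := by
        exact mul_le_mul_of_nonneg_left this (le_of_lt hk0)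
  calc ((k : ℝ) + 1) ^ k ≤ ((k : ℝ) * Real.exp (1 / k)) ^ k := by
        exact pow_le_pow_left₀ (by positivity) h1 k
  _ = (k : ℝ) ^ k * Real.exp (1 / k) ^ k := mul_pow _ _ _
  _ = (k : ℝ) ^ k * Real.exp 1 := by
        rw [← Real.exp_nat_mul]
        congr 1
        field_simp

private lemma sub2 (k : ℕ) (hk : 1 ≤ k) :
    Real.exp 1 * (k : ℝ) ^ (k + 1) ≤ ((k : ℝ) + 1) ^ (k + 1) := by
  have hk0 : (0 : ℝ) < k := by exact_mod_cast hk
  have hx : Real.exp (1 / ((k : ℝ) + 1)) ≤ ((k : ℝ) + 1) / k := by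
    set x : ℝ := 1 / ((k : ℝ) + 1) with hxdef
    have hx1 : (0:ℝ) < 1 - x := by
      rw [hxdef]
      have : (1:ℝ) / ((k:ℝ)+1) < 1 := by
        rw [div_lt_one (by positivity)]; linarith
      linarith
    have h2 : 1 - x ≤ Real.exp (-x) := by
      have := Real.add_one_le_exp (-x); linarith
    have h3 : Real.exp x * (1 - x) ≤ 1 := by
      calc Real.exp x * (1 - x) ≤ Real.exp x * Real.exp (-x) :=
            mul_le_mul_of_nonneg_left h2 (le_of_lt (Real.exp_pos x))
      _ = 1 := by rw [← Real.exp_add]; simp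
    have h1x : 1 - x = (k : ℝ) / ((k:ℝ)+1) := by
      rw [hxdef]; field_simp; ring
    rw [le_div_iff₀ hk0]
    calc Real.exp x * k = Real.exp x * (1 - x) * ((k:ℝ)+1) := by
          rw [h1x]; field_simp
    _ ≤ 1 * ((k:ℝ)+1) := by
          apply mul_le_mul_of_nonneg_right h3 (by positivity)
    _ = (k : ℝ) + 1 := one_mul _
  have hexp1 : Real.exp 1 ≤ (((k : ℝ) + 1) / k) ^ (k + 1) := by
    have : Real.exp 1 = Real.exp (1 / ((k : ℝ) + 1)) ^ (k + 1) := by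
      rw [← Real.exp_nat_mul]
      congr 1
      field_simp
      exact (Nat.cast_succ k).symm
    rw [this]
    exact pow_le_pow_left₀ (le_of_lt (Real.exp_pos _)) hx (k + 1)
  calc Real.exp 1 * (k : ℝ) ^ (k + 1) ≤ (((k : ℝ) + 1) / k) ^ (k + 1) * (k : ℝ) ^ (k + 1) :=
        mul_le_mul_of_nonneg_right hexp1 (by positivity)
  _ = ((k : ℝ) + 1) ^ (k + 1) := by
      rw [div_pow, div_mul_cancel₀]
      positivity

/-- `n^n ≤ n! * e^(n-1)` for `n ≥ 1`. -/
private lemma pow_self_le_factorial (n : ℕ) (hn : 1 ≤ n) :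
    (n : ℝ) ^ n ≤ (n.factorial : ℝ) * Real.exp ((n : ℝ) - 1) := by
  induction n with
  | zero => omega
  | succ m ih =>
    rcases Nat.eq_or_lt_of_le hn with h | h
    · simp [← h]
    · have hm : 1 ≤ m := by omega
      have ihm := ih hm
      have hc : ((m + 1 : ℕ) : ℝ) = (m : ℝ) + 1 := by push_cast; ring
      show ((m + 1 : ℕ) : ℝ) ^ (m + 1) ≤ ((m+1).factorial : ℝ) * Real.exp (((m+1 : ℕ) : ℝ) - 1)
      rw [hc]
      have hfc : ((m+1).factorial : ℝ) = ((m : ℝ) + 1) * (m.factorial : ℝ) := by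
        rw [Nat.factorial_succ]; push_cast; ring
      rw [hfc]
      calc ((m : ℝ) + 1) ^ (m + 1) = ((m : ℝ) + 1) * ((m : ℝ) + 1) ^ m := by ring
      _ ≤ ((m : ℝ) + 1) * ((m : ℝ) ^ m * Real.exp 1) := by
          exact mul_le_mul_of_nonneg_left (sub1 m hm) (by positivity)
      _ ≤ ((m : ℝ) + 1) * ((m.factorial : ℝ) * Real.exp ((m : ℝ) - 1) * Real.exp 1) := by
          apply mul_le_mul_of_nonneg_left _ (by positivity)
          exact mul_le_mul_of_nonneg_right ihm (le_of_lt (Real.exp_pos 1))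
      _ = ((m : ℝ) + 1) * (m.factorial : ℝ) * Real.exp (((m : ℝ) + 1) - 1) := by
          rw [show ((m:ℝ) + 1) - 1 = ((m:ℝ) - 1) + 1 by ring, Real.exp_add]
          ring

/-- `b! * e^(b-1) ≤ b^(b+1)` for `b ≥ 1`. -/
private lemma factorial_le_pow_self (b : ℕ) (hb : 1 ≤ b) :
    (b.factorial : ℝ) * Real.exp ((b : ℝ) - 1) ≤ (b : ℝ) ^ (b + 1) := by
  induction b with
  | zero => omega
  | succ m ih =>
    rcases Nat.eq_or_lt_of_le hb with h | h
    · simp [← h]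
    · have hm : 1 ≤ m := by omega
      have ihm := ih hm
      have step : Real.exp 1 * (m : ℝ) ^ (m + 1) ≤ ((m : ℝ) + 1) ^ (m + 1) := sub2 m hm
      have hc : ((m + 1 : ℕ) : ℝ) = (m : ℝ) + 1 := by push_cast; ring
      have hfc : ((m+1).factorial : ℝ) = ((m : ℝ) + 1) * (m.factorial : ℝ) := by
        rw [Nat.factorial_succ]; push_cast; ring
      show ((m+1).factorial : ℝ) * Real.exp (((m+1 : ℕ):ℝ) - 1) ≤ ((m+1:ℕ):ℝ) ^ (m + 1 + 1)
      rw [hc, hfc]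
      calc ((m : ℝ) + 1) * (m.factorial : ℝ) * Real.exp (((m : ℝ) + 1) - 1)
          = ((m : ℝ) + 1) * ((m.factorial : ℝ) * Real.exp ((m : ℝ) - 1)) * Real.exp 1 := by
            rw [show ((m:ℝ) + 1) - 1 = ((m:ℝ) - 1) + 1 by ring, Real.exp_add]
            ring
      _ ≤ ((m : ℝ) + 1) * (m : ℝ) ^ (m + 1) * Real.exp 1 := by
            apply mul_le_mul_of_nonneg_right _ (le_of_lt (Real.exp_pos 1))
            exact mul_le_mul_of_nonneg_left ihm (by positivity)
      _ = ((m : ℝ) + 1) * (Real.exp 1 * (m : ℝ) ^ (m + 1)) := by ring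
      _ ≤ ((m : ℝ) + 1) * ((m : ℝ) + 1) ^ (m + 1) := by
            exact mul_le_mul_of_nonneg_left step (by positivity)
      _ = ((m : ℝ) + 1) ^ (m + 1 + 1) := by ring

/-! ### Merging lemma -/

private lemma merge (C : ℕ) : ∀ (k : ℕ) (s : Multiset ℕ), s.card ≤ k →
    (∀ a ∈ s, 1 ≤ a ∧ a ≤ C) →
    ∃ t : Multiset ℕ, t.sum = s.sum ∧ (∀ b ∈ t, 1 ≤ b ∧ b ≤ C) ∧
      (s.map Nat.factorial).prod ≤ (t.map Nat.factorial).prod ∧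
      ∀ b ∈ t, ∀ b' ∈ t.erase b, C < b + b' := by
  intro k
  induction k with
  | zero =>
    intro s hs hbound
    have : s = 0 := by
      rw [← Multiset.card_eq_zero]; omega
    subst this
    exact ⟨0, rfl, by simp, le_rfl, by simp⟩
  | succ k ih =>
    intro s hs hbound
    by_cases hex : ∃ b ∈ s, ∃ b' ∈ s.erase b, b + b' ≤ C
    · obtain ⟨b, hb, b', hb', hbb'⟩ := hex
      set rest : Multiset ℕ := (s.erase b).erase b' with hrest
      have hs1 : s.erase b = b' ::ₘ rest := (Multiset.cons_erase hb').symm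
      have hs0 : s = b ::ₘ b' ::ₘ rest := by
        rw [← hs1, Multiset.cons_erase hb]
      set s' : Multiset ℕ := (b + b') ::ₘ rest with hs'
      have hcard : s'.card ≤ k := by
        have h1 : s.card = rest.card + 2 := by rw [hs0]; simp; try omega
        have h2 : s'.card = rest.card + 1 := by rw [hs']; simp
        omega
      have hbound' : ∀ a ∈ s', 1 ≤ a ∧ a ≤ C := by
        intro a ha
        rw [hs', Multiset.mem_cons] at ha
        rcases ha with h | h
        · subst h
          constructor
          · have := (hbound b hb).1; omega
          · exact hbb'
        · exact hbound a (by rw [hs0]; simp [Multiset.mem_cons, h])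
      obtain ⟨t, ht_sum, ht_bound, ht_prod, ht_pair⟩ := ih s' hcard hbound'
      refine ⟨t, ?_, ht_bound, ?_, ht_pair⟩
      · rw [ht_sum, hs', hs0]
        simp only [Multiset.sum_cons]
        ring
      · refine le_trans ?_ ht_prod
        rw [hs0, hs']
        simp only [Multiset.map_cons, Multiset.prod_cons, ← mul_assoc]
        apply Nat.mul_le_mul_right
        have hdvd : b.factorial * b'.factorial ∣ (b + b').factorial :=
          Nat.factorial_mul_factorial_dvd_factorial_add b b'
        exact Nat.le_of_dvd (Nat.factorial_pos _) hdvd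
    · push_neg at hex
      exact ⟨s, rfl, hbound, le_rfl, hex⟩

/-! ### Key analytic lemma -/

private lemma key_entropy (d : ℝ) (hd : 1 / 2 < d) (hd1 : d < 1) (n b₀ : ℕ)
    (hn : 0 < n) (h2b : (n : ℝ) < 2 * b₀) (hbd : (b₀ : ℝ) < d * n) :
    (b₀ : ℝ) ^ b₀ * ((n - b₀ : ℕ) : ℝ) ^ (n - b₀ : ℕ) ≤
      (n : ℝ) ^ n * Real.exp (-Real.binEntropy d) ^ n := by
  have hn0 : (0 : ℝ) < n := by exact_mod_cast hn
  have hb₀n : (b₀ : ℝ) < n := lt_trans hbd (by nlinarith)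
  have hb₀nn : b₀ ≤ n := by exact_mod_cast hb₀n.le
  set x : ℝ := (b₀ : ℝ) / n with hxdef
  have hx12 : 1 / 2 < x := by
    rw [hxdef, lt_div_iff₀ hn0]; linarith
  have hxd : x < d := by
    rw [hxdef, div_lt_iff₀ hn0]; linarith [hbd]
  have hx0 : 0 < x := by linarith
  have hx1 : x < 1 := lt_trans hxd hd1
  have h1x0 : 0 < 1 - x := by linarith
  set m : ℕ := n - b₀ with hmdef
  have hmcast : (m : ℝ) = (n : ℝ) - b₀ := by
    rw [hmdef]; push_cast [Nat.cast_sub hb₀nn]; ring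
  have hb₀x : (b₀ : ℝ) = x * n := by rw [hxdef]; field_simp
  have hmx : (m : ℝ) = (1 - x) * n := by rw [hmcast, hxdef]; field_simp
  -- rewrite LHS
  have hL : (b₀ : ℝ) ^ b₀ * (m : ℝ) ^ m = (n : ℝ) ^ n * (x ^ b₀ * (1 - x) ^ m) := by
    calc (b₀ : ℝ) ^ b₀ * (m : ℝ) ^ m = (x * n) ^ b₀ * ((1 - x) * n) ^ m := by
          rw [← hb₀x, ← hmx]
    _ = (x ^ b₀ * (1 - x) ^ m) * ((n:ℝ) ^ b₀ * (n:ℝ) ^ m) := by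
          rw [mul_pow, mul_pow]; ring
    _ = (n : ℝ) ^ n * (x ^ b₀ * (1 - x) ^ m) := by
          rw [← pow_add]
          have : b₀ + m = n := by omega
          rw [this]; ring
  rw [hL]
  apply mul_le_mul_of_nonneg_left _ (by positivity)
  -- x^b₀ (1-x)^m = exp (n * (-binEntropy x))
  have hent : ∀ y : ℝ, 0 < y → y < 1 → -Real.binEntropy y = y * Real.log y + (1 - y) * Real.log (1 - y) := by
    intro y hy0 hy1
    rw [Real.binEntropy]
    rw [Real.log_inv, Real.log_inv]
    ring
  have hxe : x ^ b₀ * (1 - x) ^ m = Real.exp ((n : ℝ) * (-Real.binEntropy x)) := by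
    rw [hent x hx0 hx1]
    have e1 : x ^ b₀ = Real.exp ((b₀ : ℝ) * Real.log x) := by
      rw [mul_comm, Real.exp_mul, Real.exp_log hx0, Real.rpow_natCast]
    have e2 : (1 - x) ^ m = Real.exp ((m : ℝ) * Real.log (1 - x)) := by
      rw [mul_comm, Real.exp_mul, Real.exp_log h1x0, Real.rpow_natCast]
    rw [e1, e2, ← Real.exp_add]
    congr 1
    rw [hb₀x, hmx]
    ring
  rw [hxe]
  have hmono : Real.binEntropy d ≤ Real.binEntropy x := by
    rcases eq_or_lt_of_le hxd.le with h | h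
    · rw [h]
    · apply le_of_lt
      exact Real.binEntropy_strictAntiOn
        ⟨by rw [inv_eq_one_div]; linarith, hx1.le⟩
        ⟨by rw [inv_eq_one_div]; linarith, hd1.le⟩ h
  have : (n : ℝ) * (-Real.binEntropy x) ≤ (n : ℝ) * (-Real.binEntropy d) := by
    apply mul_le_mul_of_nonneg_left _ (le_of_lt hn0)
    linarith
  calc Real.exp ((n : ℝ) * (-Real.binEntropy x)) ≤ Real.exp ((n : ℝ) * (-Real.binEntropy d)) :=
        Real.exp_le_exp.mpr this
  _ = Real.exp (-Real.binEntropy d) ^ n := by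
      rw [← Real.exp_nat_mul]

/-! ### Combinatorial core lemma -/

private lemma comb (d : ℝ) (hd : 1 / 2 < d) (hd1 : d < 1) :
    ∃ N : ℕ, ∀ n : ℕ, N ≤ n → ∀ (ι : Type) (_ : Fintype ι) (f : ι → ℕ),
      (∀ i, 1 ≤ f i) → (∑ i, f i) = n → (∀ i, (f i : ℝ) < d * n) →
      ((∏ i, (f i).factorial : ℕ) : ℝ) < d ^ n * n.factorial := by
  have hd0 : (0 : ℝ) < d := by linarith
  set K : ℝ := Real.exp (-Real.binEntropy d) with hK
  have hK0 : 0 < K := Real.exp_pos _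
  have hKd : K < d := by
    rw [hK]
    nth_rewrite 2 [show d = Real.exp (Real.log d) from (Real.exp_log hd0).symm]
    apply Real.exp_lt_exp.mpr
    have h1d : (0:ℝ) < 1 - d := by linarith
    have hlog : Real.log (1 - d) < Real.log d := Real.log_lt_log h1d (by linarith)
    have hBE : Real.binEntropy d = -(d * Real.log d) - (1-d) * Real.log (1-d) := by
      rw [Real.binEntropy, Real.log_inv, Real.log_inv]; ring
    rw [hBE]
    nlinarith [hlog, h1d]
  set c : ℝ := d / K with hc
  have hc1 : 1 < c := by rw [hc, lt_div_iff₀ hK0]; linarith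
  have h2d : 1 < 2 * d := by linarith
  set ρ : ℝ := min (2*d) c with hρ
  have hρ1 : 1 < ρ := lt_min h2d hc1
  have hρ0 : 0 < ρ := lt_trans one_pos hρ1
  have hev : ∀ᶠ m : ℕ in Filter.atTop, (m:ℝ)^5 / ρ^m < Real.exp (-4) :=
    (tendsto_pow_const_div_const_pow_of_one_lt 5 hρ1).eventually_lt_const (Real.exp_pos _)
  obtain ⟨N₁, hN₁⟩ := Filter.eventually_atTop.mp hev
  set N₂ : ℕ := ⌈2 / (2*d - 1)⌉₊ with hN₂def
  refine ⟨max (max N₁ N₂) 1, fun n hn ι instι f hf1 hfsum hflt => ?_⟩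
  have hn1 : 1 ≤ n := le_trans (le_max_right _ 1) hn
  have hnN1 : N₁ ≤ n := le_trans (le_trans (le_max_left _ _) (le_max_left _ _)) hn
  have hnN2 : N₂ ≤ n := le_trans (le_trans (le_max_right _ _) (le_max_left _ _)) hn
  have hn0R : (0:ℝ) < n := by exact_mod_cast hn1
  have hn1R : (1:ℝ) ≤ n := by exact_mod_cast hn1
  have h2d1n : 2 ≤ (2*d - 1) * n := by
    have h1 : (2 / (2*d-1)) ≤ (N₂ : ℝ) := Nat.le_ceil _
    have h2 : (N₂ : ℝ) ≤ n := by exact_mod_cast hnN2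
    have h3 : (0:ℝ) < 2*d - 1 := by linarith
    calc (2:ℝ) = (2/(2*d-1)) * (2*d-1) := by field_simp
    _ ≤ (n:ℝ) * (2*d-1) := mul_le_mul_of_nonneg_right (le_trans h1 h2) (le_of_lt h3)
    _ = (2*d-1) * n := mul_comm _ _
  -- the cap
  set C : ℕ := ⌈d * n⌉₊ - 1 with hCdef
  have hceil1 : 1 ≤ ⌈d * (n:ℝ)⌉₊ := by
    rw [Nat.one_le_ceil_iff]; positivity
  have hCcast : (C:ℝ) = (⌈d * (n:ℝ)⌉₊ : ℝ) - 1 := by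
    rw [hCdef]; push_cast [Nat.cast_sub hceil1]; ring
  have hCd : (C:ℝ) < d * n := by
    have := Nat.ceil_lt_add_one (show (0:ℝ) ≤ d*n by positivity)
    rw [hCcast]; linarith
  have hCge : d * n - 1 ≤ (C:ℝ) := by
    have := Nat.le_ceil (d * (n:ℝ))
    rw [hCcast]; linarith
  have hCn2R : (n:ℝ) ≤ 2 * C := by linarith
  have hCn2 : n ≤ 2 * C := by exact_mod_cast hCn2R
  have hCpos : 0 < C := by omega
  -- the multiset of parts
  set s : Multiset ℕ := Finset.univ.val.map f with hs
  have hssum : s.sum = n := hfsum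
  have hsbound : ∀ a ∈ s, 1 ≤ a ∧ a ≤ C := by
    intro a ha
    rw [hs, Multiset.mem_map] at ha
    obtain ⟨i, _, rfl⟩ := ha
    refine ⟨hf1 i, ?_⟩
    have : f i < ⌈d * (n:ℝ)⌉₊ := Nat.lt_ceil.mpr (hflt i)
    omega
  obtain ⟨t, htsum, htbound, htprod, htpair⟩ := merge C s.card s le_rfl hsbound
  have htsum' : t.sum = n := htsum.trans hssum
  set r := Multiset.card t with hr
  -- r ≤ 5
  have hr5 : r ≤ 5 := by
    rcases Multiset.empty_or_exists_mem t with h0 | ⟨b, hb⟩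
    · rw [hr, h0]; simp
    · have hTne : {y | y ∈ t}.Nonempty := ⟨b, hb⟩
      set b0 := sInf {y | y ∈ t} with hb0
      have hb0mem : b0 ∈ t := Nat.sInf_mem hTne
      have hb0min : ∀ y ∈ t, b0 ≤ y := fun y hy => Nat.sInf_le hy
      have hkey : ∀ z ∈ (t.erase b0).map (fun y => 2*y), C + 1 ≤ z := by
        intro z hz
        rw [Multiset.mem_map] at hz
        obtain ⟨y, hy, rfl⟩ := hz
        have h1 := htpair b0 hb0mem y hy
        have h2 := hb0min y (Multiset.mem_of_mem_erase hy)
        omega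
      have hle := Multiset.card_nsmul_le_sum hkey
      have hsum2 : ((t.erase b0).map (fun y => 2*y)).sum = 2 * (t.erase b0).sum := by
        rw [show (fun y => 2*y) = (fun y => 2 * id y) from rfl, Multiset.sum_map_mul_left]
        simp
      have hcard2 : Multiset.card ((t.erase b0).map (fun y => 2*y)) = r - 1 := by
        rw [Multiset.card_map, Multiset.card_erase_of_mem hb0mem]
        rfl
      have herasesum : b0 + (t.erase b0).sum = n := by
        rw [← Multiset.sum_cons, Multiset.cons_erase hb0mem, htsum']
      rw [hcard2, hsum2, smul_eq_mul] at hle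
      have hb01 : 1 ≤ b0 := (htbound b0 hb0mem).1
      have h4 : (r - 1) * (C + 1) ≤ 2 * n := by omega
      have h5 : (r - 1) * (C + 1) < 4 * (C + 1) := by omega
      have := Nat.lt_of_mul_lt_mul_right h5
      omega
  have hr5R : (r : ℝ) ≤ 5 := by exact_mod_cast hr5
  -- real products
  set B : ℝ := (t.map (fun b : ℕ => (b:ℝ)^b)).prod with hB
  set P : ℝ := (t.map (fun b : ℕ => (b:ℝ))).prod with hP
  set E : ℝ := (t.map (fun b : ℕ => Real.exp (1 - (b:ℝ)))).prod with hE
  have hBnn : 0 ≤ B := ms_prod_nonneg _ _ (fun b _ => by positivity)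
  have hPnn : 0 ≤ P := ms_prod_nonneg _ _ (fun b _ => by positivity)
  have hEnn : 0 ≤ E := ms_prod_nonneg _ _ (fun b _ => by positivity)
  have hEval : E = Real.exp ((r:ℝ) - n) := by
    rw [hE, ms_prod_exp t (fun b : ℕ => 1 - (b:ℝ)), ms_sum_one_sub, htsum', hr]
  have hstep2 : (t.map (fun b : ℕ => (b.factorial : ℝ))).prod ≤ B * (P * E) := by
    rw [hB, hP, hE, ← Multiset.prod_map_mul, ← Multiset.prod_map_mul]
    apply ms_prod_le
    · intro b _; positivity
    · intro b hbt
      have hb1 : 1 ≤ b := (htbound b hbt).1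
      have hfle := factorial_le_pow_self b hb1
      calc (b.factorial : ℝ) = (b.factorial : ℝ) * Real.exp ((b:ℝ)-1) * Real.exp (1-(b:ℝ)) := by
            rw [mul_assoc, ← Real.exp_add]; simp
      _ ≤ (b:ℝ)^(b+1) * Real.exp (1-(b:ℝ)) :=
            mul_le_mul_of_nonneg_right hfle (le_of_lt (Real.exp_pos _))
      _ = (b:ℝ)^b * ((b:ℝ) * Real.exp (1 - (b:ℝ))) := by rw [pow_succ]; ring
  have hPle : P ≤ (n:ℝ)^5 := by
    have h1 : P ≤ (n:ℝ)^r := by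
      rw [hP]
      calc (t.map (fun b : ℕ => (b:ℝ))).prod ≤ (t.map (fun _ : ℕ => (n:ℝ))).prod := by
            apply ms_prod_le
            · intro b _; positivity
            · intro b hbt
              have : b ≤ n := htsum' ▸ ms_le_sum hbt
              exact_mod_cast this
      _ = (n:ℝ)^r := by rw [Multiset.map_const', Multiset.prod_replicate, hr]
    calc P ≤ (n:ℝ)^r := h1
    _ ≤ (n:ℝ)^5 := pow_le_pow_right₀ hn1R hr5
  have hEle : E ≤ Real.exp 4 * Real.exp (1 - (n:ℝ)) := by
    rw [hEval, ← Real.exp_add]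
    apply Real.exp_le_exp.mpr
    linarith
  have hfacge : (n:ℝ)^n * Real.exp (1 - (n:ℝ)) ≤ (n.factorial : ℝ) := by
    have h1 := pow_self_le_factorial n hn1
    calc (n:ℝ)^n * Real.exp (1 - (n:ℝ))
        ≤ (n.factorial : ℝ) * Real.exp ((n:ℝ)-1) * Real.exp (1 - (n:ℝ)) :=
          mul_le_mul_of_nonneg_right h1 (le_of_lt (Real.exp_pos _))
    _ = (n.factorial : ℝ) := by rw [mul_assoc, ← Real.exp_add]; simp
  -- numeric bound
  have hnum : (n:ℝ)^5 * Real.exp 4 < ρ^n := by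
    have h := hN₁ n hnN1
    have hρn : (0:ℝ) < ρ^n := pow_pos hρ0 n
    rw [div_lt_iff₀ hρn] at h
    calc (n:ℝ)^5 * Real.exp 4 < (Real.exp (-4) * ρ^n) * Real.exp 4 :=
          mul_lt_mul_of_pos_right h (Real.exp_pos 4)
    _ = ρ^n * (Real.exp (-4) * Real.exp 4) := by ring
    _ = ρ^n := by rw [← Real.exp_add]; norm_num
  -- cast chain prefix
  have hprodcast : (∏ i, (f i).factorial : ℕ) = (s.map Nat.factorial).prod := by
    rw [hs, Multiset.map_map]
    rfl
  have hchain1 : ((∏ i, (f i).factorial : ℕ) : ℝ) ≤ B * (P * E) := by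
    calc ((∏ i, (f i).factorial : ℕ) : ℝ) = (((s.map Nat.factorial).prod : ℕ) : ℝ) := by
          rw [hprodcast]
    _ ≤ (((t.map Nat.factorial).prod : ℕ) : ℝ) := by exact_mod_cast htprod
    _ = (t.map (fun b : ℕ => (b.factorial : ℝ))).prod := by
          rw [Nat.cast_multiset_prod, Multiset.map_map]
          rfl
    _ ≤ B * (P * E) := hstep2
  -- case analysis on the largest block
  have hmain : B * (P * E) < d^n * ((n:ℝ)^n * Real.exp (1 - (n:ℝ))) := by
    by_cases hbig : ∃ b₀ ∈ t, n < 2 * b₀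
    · -- big block case
      obtain ⟨b₀, hb₀t, h2b⟩ := hbig
      have hb₀C : b₀ ≤ C := (htbound b₀ hb₀t).2
      have hb₀d : (b₀:ℝ) < d * n := lt_of_le_of_lt (by exact_mod_cast hb₀C) hCd
      have herasesum : b₀ + (t.erase b₀).sum = n := by
        rw [← Multiset.sum_cons, Multiset.cons_erase hb₀t, htsum']
      have hesum : (t.erase b₀).sum = n - b₀ := by omega
      have hBsplit : B = (b₀:ℝ)^b₀ * ((t.erase b₀).map (fun b : ℕ => (b:ℝ)^b)).prod := by
        rw [hB]
        conv_lhs => rw [← Multiset.cons_erase hb₀t]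
        rw [Multiset.map_cons, Multiset.prod_cons]
      have hB2 : ((t.erase b₀).map (fun b : ℕ => (b:ℝ)^b)).prod ≤
          ((n - b₀ : ℕ):ℝ)^(n - b₀ : ℕ) := by
        calc ((t.erase b₀).map (fun b : ℕ => (b:ℝ)^b)).prod
            ≤ ((t.erase b₀).map (fun b : ℕ => ((n - b₀ : ℕ):ℝ)^b)).prod := by
              apply ms_prod_le
              · intro b _; positivity
              · intro b hbt
                apply pow_le_pow_left₀ (by positivity)
                have hble : b ≤ n - b₀ := hesum ▸ ms_le_sum hbt
                exact_mod_cast hble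
        _ = ((n - b₀ : ℕ):ℝ)^((t.erase b₀).sum) := ms_prod_pow _ _
        _ = ((n - b₀ : ℕ):ℝ)^(n - b₀ : ℕ) := by rw [hesum]
      have hBle : B ≤ (n:ℝ)^n * K^n := by
        rw [hBsplit]
        calc (b₀:ℝ)^b₀ * ((t.erase b₀).map (fun b : ℕ => (b:ℝ)^b)).prod
            ≤ (b₀:ℝ)^b₀ * ((n - b₀ : ℕ):ℝ)^(n - b₀ : ℕ) :=
              mul_le_mul_of_nonneg_left hB2 (by positivity)
        _ ≤ (n:ℝ)^n * K^n := key_entropy d hd hd1 n b₀ (by omega) (by exact_mod_cast h2b) hb₀d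
      have hnumc : (n:ℝ)^5 * Real.exp 4 < c^n := by
        calc (n:ℝ)^5 * Real.exp 4 < ρ^n := hnum
        _ ≤ c^n := pow_le_pow_left₀ (le_of_lt hρ0) (min_le_right _ _) n
      have hKc : K^n * c^n = d^n := by
        rw [← mul_pow]
        congr 1
        rw [hc]
        field_simp
      have hq : K^n * ((n:ℝ)^5 * Real.exp 4) < d^n := by
        calc K^n * ((n:ℝ)^5 * Real.exp 4) < K^n * c^n :=
          mul_lt_mul_of_pos_left hnumc (pow_pos hK0 n)
        _ = d^n := hKc
      calc B * (P * E)
          ≤ ((n:ℝ)^n * K^n) * ((n:ℝ)^5 * (Real.exp 4 * Real.exp (1 - (n:ℝ)))) := by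
            apply mul_le_mul hBle _ (mul_nonneg hPnn hEnn) (by positivity)
            exact mul_le_mul hPle hEle hEnn (by positivity)
      _ = ((n:ℝ)^n * Real.exp (1 - (n:ℝ))) * (K^n * ((n:ℝ)^5 * Real.exp 4)) := by ring
      _ < ((n:ℝ)^n * Real.exp (1 - (n:ℝ))) * d^n := by
            apply mul_lt_mul_of_pos_left hq
            positivity
      _ = d^n * ((n:ℝ)^n * Real.exp (1 - (n:ℝ))) := by ring
    · -- all blocks small
      push_neg at hbig
      have hBle : B ≤ (n:ℝ)^n / 2^n := by
        rw [hB]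
        calc (t.map (fun b : ℕ => (b:ℝ)^b)).prod
            ≤ (t.map (fun b : ℕ => ((n:ℝ)/2)^b)).prod := by
              apply ms_prod_le
              · intro b _; positivity
              · intro b hbt
                apply pow_le_pow_left₀ (by positivity)
                have := hbig b hbt
                have hb2n : 2 * b ≤ n := this
                have : (2:ℝ) * b ≤ n := by exact_mod_cast hb2n
                linarith
        _ = ((n:ℝ)/2)^(t.sum) := ms_prod_pow _ _
        _ = (n:ℝ)^n / 2^n := by rw [htsum', div_pow]
      have hnum2 : (n:ℝ)^5 * Real.exp 4 < 2^n * d^n := by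
        calc (n:ℝ)^5 * Real.exp 4 < ρ^n := hnum
        _ ≤ (2*d)^n := pow_le_pow_left₀ (le_of_lt hρ0) (min_le_left _ _) n
        _ = 2^n * d^n := mul_pow _ _ _
      have hq : (n:ℝ)^5 * Real.exp 4 / 2^n < d^n := by
        rw [div_lt_iff₀ (by positivity : (0:ℝ) < 2^n)]
        calc (n:ℝ)^5 * Real.exp 4 < 2^n * d^n := hnum2
        _ = d^n * 2^n := mul_comm _ _
      calc B * (P * E)
          ≤ ((n:ℝ)^n / 2^n) * ((n:ℝ)^5 * (Real.exp 4 * Real.exp (1 - (n:ℝ)))) := by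
            apply mul_le_mul hBle _ (mul_nonneg hPnn hEnn) (by positivity)
            exact mul_le_mul hPle hEle hEnn (by positivity)
      _ = ((n:ℝ)^n * Real.exp (1 - (n:ℝ))) * ((n:ℝ)^5 * Real.exp 4 / 2^n) := by ring
      _ < ((n:ℝ)^n * Real.exp (1 - (n:ℝ))) * d^n := by
            apply mul_lt_mul_of_pos_left hq
            positivity
      _ = d^n * ((n:ℝ)^n * Real.exp (1 - (n:ℝ))) := by ring
  calc ((∏ i, (f i).factorial : ℕ) : ℝ) ≤ B * (P * E) := hchain1
  _ < d^n * ((n:ℝ)^n * Real.exp (1 - (n:ℝ))) := hmain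
  _ ≤ d^n * (n.factorial : ℝ) := mul_le_mul_of_nonneg_left hfacge (by positivity)

/-- Lemma 3.11 (`factorials`). For every `1/2 < d < 1` there is `N(d)` such that for all
`n ≥ N(d)`: if `H ≤ Sym(n)` with `|H| ≥ dⁿ·n!`, then `H` has an orbit on `[n]` of length at
least `d·n`. -/
theorem large_subgroup_has_long_orbit (d : ℝ) (hd : 1 / 2 < d) (hd1 : d < 1) :
    ∃ N : ℕ, ∀ n : ℕ, N ≤ n →
      ∀ H : Subgroup (Equiv.Perm (Fin n)),
        d ^ n * n.factorial ≤ (Nat.card H : ℝ) →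
        ∃ a : Fin n, d * n ≤ ({x : Fin n | ∃ g ∈ H, g a = x}.ncard : ℝ) := by
  classical
  obtain ⟨N, hN⟩ := comb d hd hd1
  refine ⟨max N 1, fun n hn H hH => ?_⟩
  by_contra hcon
  push_neg at hcon
  letI : Fintype (Quotient (MulAction.orbitRel H (Fin n))) := Fintype.ofFinite _
  set f : Fin n → Quotient (MulAction.orbitRel H (Fin n)) :=
    fun x => Quotient.mk (MulAction.orbitRel H (Fin n)) x with hfdef
  have hstab : ∀ g : Equiv.Perm (Fin n), g ∈ H → f ∘ g = f := by
    intro g hg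
    funext x
    apply Quotient.sound
    exact ⟨⟨g, hg⟩, rfl⟩
  have hcard1 : Nat.card H ≤ Nat.card {g : Equiv.Perm (Fin n) // f ∘ g = f} := by
    apply Nat.card_le_card_of_injective
      (fun g : H => (⟨g.1, hstab g.1 g.2⟩ : {g : Equiv.Perm (Fin n) // f ∘ g = f}))
    intro a b hab
    have h1 := congrArg
      (Subtype.val : {g : Equiv.Perm (Fin n) // f ∘ g = f} → Equiv.Perm (Fin n)) hab
    exact Subtype.ext h1
  have hcard2 : Nat.card {g : Equiv.Perm (Fin n) // f ∘ g = f} =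
      ∏ ω, (Fintype.card {a // f a = ω}).factorial := by
    rw [Nat.card_eq_fintype_card]
    exact DomMulAct.stabilizer_card f
  set F : Quotient (MulAction.orbitRel H (Fin n)) → ℕ :=
    fun ω => Fintype.card {a // f a = ω} with hFdef
  have hF1 : ∀ ω, 1 ≤ F ω := by
    intro ω
    obtain ⟨x, hx⟩ := ω.exists_rep
    have : Nonempty {a // f a = ω} := ⟨⟨x, hx⟩⟩
    exact Fintype.card_pos_iff.mpr this
  have hFsum : ∑ ω, F ω = n := by
    calc ∑ ω, F ω = Fintype.card ((ω : Quotient (MulAction.orbitRel H (Fin n)))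
        × {a // f a = ω}) := Fintype.card_sigma.symm
    _ = Fintype.card (Fin n) := Fintype.card_congr (Equiv.sigmaFiberEquiv f)
    _ = n := Fintype.card_fin n
  have hFlt : ∀ ω, (F ω : ℝ) < d * n := by
    intro ω
    obtain ⟨a, ha⟩ := ω.exists_rep
    have hFeq : F ω = Set.ncard {x : Fin n | ∃ g ∈ H, g a = x} := by
      have hset : {x : Fin n | f x = ω} = {x : Fin n | ∃ g ∈ H, g a = x} := by
        ext x
        simp only [Set.mem_setOf_eq]
        constructor
        · intro hx
          rw [← ha] at hx
          obtain ⟨⟨g, hg⟩, hgx⟩ := Quotient.exact hx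
          exact ⟨g, hg, hgx⟩
        · rintro ⟨g, hg, rfl⟩
          rw [← ha]
          exact Quotient.sound ⟨⟨g, hg⟩, rfl⟩
      rw [← hset, ← Nat.card_coe_set_eq]
      show Fintype.card {a // f a = ω} = Nat.card ↑{x : Fin n | f x = ω}
      rw [← Nat.card_eq_fintype_card]
      rfl
    rw [hFeq]
    exact hcon a
  have hmain := hN n (le_trans (le_max_left _ 1) hn)
    (Quotient (MulAction.orbitRel H (Fin n))) inferInstance F hF1 hFsum hFlt
  have hle2 : (Nat.card H : ℝ) ≤ ((∏ ω, (F ω).factorial : ℕ) : ℝ) := by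
    exact_mod_cast hcard1.trans_eq hcard2
  linarith
end

section
/- Let Σ = {α₁, …, α_m} ⊆ [n] and A ⊆ Sym([n]). Suppose that for all i = 1, …, m, the orbit of α_i under the pointwise stabilizer A_(α₁,…,α_{i−1}) has size at least r_i. Then A^m intersects at least r₁·r₂·⋯·r_m distinct right cosets of the pointwise stabilizer Sym([n])_(Σ) in Sym([n]). -/
open scoped Pointwise

private lemma list_prod_mem_pow {M : Type*} [Monoid M] (A : Set M) :
    ∀ l : List M, (∀ x ∈ l, x ∈ A) → l.prod ∈ A ^ l.length := by
  intro l
  induction l with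
  | nil => simp
  | cons a l ih =>
    intro h
    rw [List.prod_cons, List.length_cons, pow_succ']
    exact Set.mul_mem_mul (h a (List.mem_cons_self))
      (ih fun x hx => h x (List.mem_cons_of_mem _ hx))

private lemma prod_fix {n : ℕ} (x : Fin n) :
    ∀ (l : List (Equiv.Perm (Fin n))), (∀ p ∈ l, p x = x) → l.prod x = x := by
  intro l
  induction l with
  | nil => simp
  | cons a l ih =>
    intro h
    rw [List.prod_cons, Equiv.Perm.mul_apply,
      ih fun p hp => h p (List.mem_cons_of_mem _ hp), h a (List.mem_cons_self)]

/-- Lemma 3.16 (`hog`). Let `Σ = {α₁,…,α_m} ⊆ [n]` and `A ⊆ Sym([n])`. If for each `i` the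
orbit of `α_i` under the pointwise stabilizer `A_(α₁,…,α_{i-1})` has size at least `r_i`,
then `A^m` meets at least `r₁⋯r_m` cosets of the pointwise stabilizer of `Σ` in `Sym([n])`. -/
theorem stabilizer_chain_coset_count (n m : ℕ) (α : Fin m → Fin n)
    (hα : Function.Injective α) (A : Set (Equiv.Perm (Fin n))) (r : Fin m → ℕ)
    (horb : ∀ i : Fin m,
      r i ≤
        {β : Fin n | ∃ g ∈ A, (∀ j : Fin m, j < i → g (α j) = α j) ∧ g (α i) = β}.ncard) :
    (∏ i : Fin m, r i) ≤
      Set.ncard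
        ((QuotientGroup.mk :
            Equiv.Perm (Fin n) →
              Equiv.Perm (Fin n) ⧸
                ⨅ i : Fin m, MulAction.stabilizer (Equiv.Perm (Fin n)) (α i)) '' (A ^ m)) := by
  classical
  have hchoice : ∀ i : Fin m, ∃ g : Fin (r i) → Equiv.Perm (Fin n),
      (∀ k, g k ∈ A) ∧ (∀ k, ∀ j : Fin m, j < i → g k (α j) = α j) ∧
      Function.Injective fun k => g k (α i) := by
    intro i
    set S := {β : Fin n | ∃ g ∈ A, (∀ j : Fin m, j < i → g (α j) = α j) ∧ g (α i) = β} with hSdef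
    have hfin : S.Finite := Set.toFinite S
    have hcard : r i ≤ Nat.card S := by
      rw [Nat.card_coe_set_eq]
      exact horb i
    have : Fintype S := hfin.fintype
    obtain ⟨e⟩ : Nonempty (Fin (r i) ↪ S) := by
      apply Function.Embedding.nonempty_of_card_le
      simpa [Nat.card_eq_fintype_card] using hcard
    have he : ∀ k, (e k : Fin n) ∈ S := fun k => (e k).2
    choose g hgA hgfix hgval using he
    refine ⟨g, hgA, hgfix, ?_⟩
    intro k k' hkk'
    apply e.injective
    apply Subtype.ext
    rw [← hgval k, ← hgval k']
    exact hkk'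
  choose g hgA hgfix hginj using hchoice
  set H := ⨅ i : Fin m, MulAction.stabilizer (Equiv.Perm (Fin n)) (α i) with hH
  set F : (∀ i, Fin (r i)) → List (Equiv.Perm (Fin n)) :=
    (fun c => List.ofFn fun i => g i (c i)) with hF
  have hFlen : ∀ c, (F c).length = m := fun c => List.length_ofFn
  have hFmem : ∀ c, (F c).prod ∈ A ^ m := by
    intro c
    have h := list_prod_mem_pow A (F c) ?_
    · rwa [hFlen] at h
    · intro x hx
      obtain ⟨i, rfl⟩ := List.mem_ofFn.mp hx
      exact hgA _ _
  have heval : ∀ c (i : Fin m),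
      (F c).prod (α i) = ((F c).take i).prod (g i (c i) (α i)) := by
    intro c i
    have hsplit : F c = (F c).take ((i:ℕ)+1) ++ (F c).drop ((i:ℕ)+1) :=
      (List.take_append_drop _ _).symm
    have hdropfix : ((F c).drop ((i:ℕ)+1)).prod (α i) = α i := by
      apply prod_fix
      intro p hp
      obtain ⟨t, ht, rfl⟩ := List.mem_iff_getElem.mp hp
      have htm : (i:ℕ)+1+t < m := by
        have := ht
        simp only [List.length_drop, hFlen] at this
        omega
      rw [List.getElem_drop]
      have : (F c)[(i:ℕ)+1+t]'(by simpa [hFlen] using htm) =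
          g ⟨(i:ℕ)+1+t, htm⟩ (c ⟨(i:ℕ)+1+t, htm⟩) := by
        simp [hF, List.getElem_ofFn]
      rw [this]
      exact hgfix _ _ i (by simp [Fin.lt_def]; omega)
    conv_lhs => rw [hsplit]
    rw [List.prod_append, Equiv.Perm.mul_apply, hdropfix]
    have hgetsome : (F c)[(i:ℕ)]? = some (g i (c i)) := by
      rw [List.getElem?_eq_getElem (by simp [hFlen, i.isLt])]
      simp [hF, List.getElem_ofFn]
    have htake : (F c).take ((i:ℕ)+1) = (F c).take i ++ [g i (c i)] := by
      rw [List.take_succ, hgetsome]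
      rfl
    rw [htake, List.prod_append, List.prod_singleton, Equiv.Perm.mul_apply]
  have hcoset : ∀ c c', (QuotientGroup.mk (s := H) (F c).prod =
      QuotientGroup.mk (F c').prod) → c = c' := by
    intro c c' hq
    have htup : ∀ i : Fin m, (F c).prod (α i) = (F c').prod (α i) := by
      intro i
      have hmem := QuotientGroup.eq.mp hq
      rw [hH, Subgroup.mem_iInf] at hmem
      have hst := hmem i
      rw [MulAction.mem_stabilizer_iff] at hst
      have h2 : (F c).prod⁻¹ ((F c').prod (α i)) = α i := by
        simpa [Equiv.Perm.smul_def, Equiv.Perm.mul_apply] using hst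
      have h3 := congrArg (F c).prod h2
      simp only [← Equiv.Perm.mul_apply, mul_inv_cancel_left] at h3
      exact h3.symm
    have key : ∀ N : ℕ, ∀ i : Fin m, (i : ℕ) < N → c i = c' i := by
      intro N
      induction N with
      | zero => intro i h; omega
      | succ N ihN =>
      intro i hiN
      have ih : ∀ j : Fin m, j < i → c j = c' j := by
        intro j hj
        refine ihN j ?_
        rw [Fin.lt_def] at hj
        omega
      have hto := htup i
      rw [heval c i, heval c' i] at hto
      have hsame : (F c).take i = (F c').take i := by
        apply List.ext_getElem (by simp [hFlen])
        intro t h1 h2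
        have hti : t < (i:ℕ) := by simpa [hFlen] using h1
        have htm : t < m := lt_of_lt_of_le hti (le_of_lt i.isLt)
        simp only [List.getElem_take]
        have e1 : (F c)[t]'(by simpa [hFlen] using htm) =
            g ⟨t, htm⟩ (c ⟨t, htm⟩) := by simp [hF, List.getElem_ofFn]
        have e2 : (F c')[t]'(by simpa [hFlen] using htm) =
            g ⟨t, htm⟩ (c' ⟨t, htm⟩) := by simp [hF, List.getElem_ofFn]
        rw [e1, e2, ih ⟨t, htm⟩ (by simpa [Fin.lt_def] using hti)]
      rw [hsame] at hto
      have hval : g i (c i) (α i) = g i (c' i) (α i) :=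
        ((F c').take i).prod.injective hto
      exact hginj i hval
    funext i
    exact key ((i : ℕ) + 1) i (Nat.lt_succ_self _)
  have : Finite (Equiv.Perm (Fin n) ⧸ H) := Quotient.finite _
  have hinj2 : Function.Injective (fun c : ∀ i, Fin (r i) =>
      (⟨QuotientGroup.mk (s := H) (F c).prod, ⟨(F c).prod, hFmem c, rfl⟩⟩ :
        ↥((QuotientGroup.mk (s := H)) '' (A ^ m)))) := by
    intro c c' h
    exact hcoset c c' (congrArg Subtype.val h)
  calc (∏ i, r i) = Nat.card (∀ i, Fin (r i)) := by simp [Nat.card_pi]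
    _ ≤ Nat.card ↥((QuotientGroup.mk (s := H)) '' (A ^ m)) :=
        Nat.card_le_card_of_injective _ hinj2
    _ = _ := Nat.card_coe_set_eq _
end
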